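/- arXiv:2304.14687 — 2 statements merged into one kernel-verified Lean document; each statement's English description precedes it below -/
import Mathlib

section
/- If λ ∈ ℂ satisfies √2·|λ| = (2n+1)π for some integer n, then exp(−i·O′) equals the matrix with rows (0, −1, 0), (−1, 0, 0), (0, 0, −1). -/
/-!
With `θ = √2 |λ|` one has `O′³ = θ² O′`, so `A = -i O′` satisfies `A³ = -θ² A`. Splitting the
exponential series into even and odd terms and comparing with the series of `cos` and `sin` gives
`exp A = 1 + (sin θ / θ) A + ((1 - cos θ) / θ²) A²`. At `θ = (2n+1)π` this collapses to
`1 + (2 / θ²) A² = 1 - O′² / |λ|²`, which is the stated matrix.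
-/

noncomputable section
open Matrix

/-- The interaction block `O′` associated with the coupling constant `λ`. -/
def Oprime (l : ℂ) : Matrix (Fin 3) (Fin 3) ℂ :=
  !![0, 0, -(starRingEnd ℂ) l;
     0, 0, -(starRingEnd ℂ) l;
     -l, -l, 0]

open NormedSpace
open scoped Nat

section PowOfCubic

variable {R 𝔸 : Type*} [CommSemiring R] [Semiring 𝔸] [Algebra R 𝔸] {A : 𝔸} {c : R}

theorem pow_two_mul_add_one_eq_of_pow_three_eq_smul (hA : A ^ 3 = c • A) (k : ℕ) :
    A ^ (2 * k + 1) = c ^ k • A := by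
  induction k with
  | zero => simp
  | succ k ih =>
    rw [show 2 * (k + 1) + 1 = 2 + (2 * k + 1) by ring, pow_add, ih, mul_smul_comm,
      ← pow_succ, hA, smul_smul, ← pow_succ]

theorem pow_two_mul_add_two_eq_of_pow_three_eq_smul (hA : A ^ 3 = c • A) (k : ℕ) :
    A ^ (2 * k + 2) = c ^ k • A ^ 2 := by
  rw [pow_succ, pow_two_mul_add_one_eq_of_pow_three_eq_smul hA, smul_mul_assoc, ← sq]

end PowOfCubic

theorem Complex.ne_zero_of_cos_eq_neg_one {z : ℂ} (h : Complex.cos z = -1) : z ≠ 0 := by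
  rintro rfl
  norm_num at h

section ExpOfCubic

variable {𝔸 : Type*} [Ring 𝔸] [Algebra ℂ 𝔸] [TopologicalSpace 𝔸] [IsTopologicalRing 𝔸]
  [ContinuousSMul ℂ 𝔸] [T2Space 𝔸] {A : 𝔸} {θ : ℂ}

theorem exp_eq_of_pow_three_eq_neg_sq_smul (hθ : θ ≠ 0) (hA : A ^ 3 = -(θ ^ 2) • A) :
    exp A = 1 + (Complex.sin θ / θ) • A + ((1 - Complex.cos θ) / θ ^ 2) • A ^ 2 := by
  have hEven : HasSum (fun k => ((2 * k)! : ℂ)⁻¹ • A ^ (2 * k))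
      (1 + ((1 - Complex.cos θ) / θ ^ 2) • A ^ 2) := by
    -- `A ^ (2 * k) = (-θ²) ^ k • E` with `E = -θ⁻² • A ^ 2`, except at `k = 0` where `A ^ 0 = 1`
    let E : 𝔸 := -(θ ^ 2)⁻¹ • A ^ 2
    convert ((Complex.hasSum_cos θ).smul_const E).add (hasSum_ite_eq 0 (1 - E)) using 1
    · funext k
      rcases k with _ | k
      · simp
      · rw [if_neg k.succ_ne_zero, add_zero, show 2 * (k + 1) = 2 * k + 2 by ring,
          pow_two_mul_add_two_eq_of_pow_three_eq_smul hA, smul_smul, smul_smul]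
        congr 1
        field_simp
        ring
    · module
  have hOdd : HasSum (fun k => ((2 * k + 1)! : ℂ)⁻¹ • A ^ (2 * k + 1))
      ((Complex.sin θ / θ) • A) := by
    convert ((Complex.hasSum_sin θ).div_const θ).smul_const A using 1
    funext k
    rw [pow_two_mul_add_one_eq_of_pow_three_eq_smul hA, smul_smul]
    congr 1
    field_simp
    ring
  rw [exp_eq_tsum ℂ, add_right_comm]
  exact (HasSum.even_add_odd (f := fun n => (n ! : ℂ)⁻¹ • A ^ n) hEven hOdd).tsum_eq

theorem exp_eq_one_add_smul_sq_of_cos_eq_neg_one (hA : A ^ 3 = -(θ ^ 2) • A)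
    (hcos : Complex.cos θ = -1) : exp A = 1 + (2 / θ ^ 2) • A ^ 2 := by
  have hsin : Complex.sin θ = 0 := by
    simpa [hcos] using Complex.sin_sq_add_cos_sq θ
  rw [exp_eq_of_pow_three_eq_neg_sq_smul (Complex.ne_zero_of_cos_eq_neg_one hcos) hA, hsin, hcos]
  norm_num

end ExpOfCubic

theorem Oprime_sq (l : ℂ) :
    Oprime l ^ 2 = (l * starRingEnd ℂ l) • !![1, 1, 0; 1, 1, 0; 0, 0, 2] := by
  ext i j
  fin_cases i <;> fin_cases j <;> simp [Oprime, sq, mul_apply, Fin.sum_univ_three] <;> ring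

theorem Oprime_pow_three (l : ℂ) : Oprime l ^ 3 = (2 * (l * starRingEnd ℂ l)) • Oprime l := by
  ext i j
  fin_cases i <;> fin_cases j <;>
    simp [Oprime, pow_succ, mul_apply, Fin.sum_univ_three, -mul_eq_mul_left_iff,
      -mul_eq_mul_right_iff] <;> ring

/-- At the critical coupling strengths `√2·|λ| = (2n+1)π`, the one-step interaction unitary
`exp(−i·O′)` equals the matrix with rows `(0,−1,0), (−1,0,0), (0,0,−1)`. -/
theorem exp_interaction_critical (l : ℂ) (n : ℤ)
    (h : Real.sqrt 2 * ‖l‖ = (2 * n + 1) * Real.pi) :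
    NormedSpace.exp ((-Complex.I) • Oprime l) =
      !![0, -1, 0;
         -1, 0, 0;
         0, 0, -1] := by
  set θ : ℂ := n * (2 * Real.pi) + Real.pi
  have hcos : Complex.cos θ = -1 := Complex.cos_int_mul_two_pi_add_pi n
  have hθ : l * starRingEnd ℂ l = θ ^ 2 / 2 := by
    have hr : ‖l‖ ^ 2 = ((2 * n + 1) * Real.pi) ^ 2 / 2 := by
      rw [← h, mul_pow, Real.sq_sqrt zero_le_two]
      ring
    rw [Complex.mul_conj', ← Complex.ofReal_pow, hr]
    push_cast
    ring
  have hcube : ((-Complex.I) • Oprime l) ^ 3 = -(θ ^ 2) • ((-Complex.I) • Oprime l) := by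
    rw [smul_pow, Oprime_pow_three, hθ, smul_smul, smul_smul]
    congr 1
    linear_combination (-θ ^ 2 * Complex.I) * Complex.I_sq
  have hscalar : 2 / θ ^ 2 * (-Complex.I) ^ 2 * (θ ^ 2 / 2) = -1 := by
    rw [neg_sq, Complex.I_sq]
    field_simp [Complex.ne_zero_of_cos_eq_neg_one hcos]
  rw [exp_eq_one_add_smul_sq_of_cos_eq_neg_one hcube hcos, smul_pow, Oprime_sq, hθ, smul_smul,
    smul_smul, hscalar, neg_one_smul, one_fin_three]
  norm_num
end
end

section
/- With the maps of the context, for every p ∈ ℝ, every λ ∈ ℂ and every function f : ℤ → ℂ, define ψ_f : ℤ → ℂ^6 by ψ_f(2y+1)_3 := f(y) and ψ_f(−2y−1)_6 := −f(y) for all y ∈ ℤ, with all other components equal to zero. Then A_p ψ_f = ψ_g where g(y) := f(y+1). (Thus on the odd-site antisymmetric subspace H_c the interaction is invisible and the interacting two-particle evolution acts as the free bilateral shift.) -/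
noncomputable section
open Matrix
open scoped Classical

/-- The 6×6 block-diagonal matrix `M = diag(O′, O′)`, where `O′` is the 3×3 matrix with rows
`(0, 0, −conj λ)`, `(0, 0, −conj λ)`, `(−λ, −λ, 0)`. -/
def Mblk (l : ℂ) : Matrix (Fin 6) (Fin 6) ℂ :=
  !![0, 0, -(starRingEnd ℂ) l, 0, 0, 0;
     0, 0, -(starRingEnd ℂ) l, 0, 0, 0;
     -l, -l, 0, 0, 0, 0;
     0, 0, 0, 0, 0, -(starRingEnd ℂ) l;
     0, 0, 0, 0, 0, -(starRingEnd ℂ) l;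
     0, 0, 0, -l, -l, 0]

/-- The one-step interaction unitary `E = exp(−i·M)`. -/
def Emat (l : ℂ) : Matrix (Fin 6) (Fin 6) ℂ := NormedSpace.exp ((-Complex.I) • Mblk l)

/-- The swap `S`: `(S x)(y) = (x(−y)₄, x(−y)₅, x(−y)₆, x(−y)₁, x(−y)₂, x(−y)₃)`. -/
def Sop (x : ℤ → Fin 6 → ℂ) : ℤ → Fin 6 → ℂ := fun y i => x (-y) (![3, 4, 5, 0, 1, 2] i)

/-- The antisymmetrizer `P₋ = (1/2)(id − S)`. -/
def Pneg (x : ℤ → Fin 6 → ℂ) : ℤ → Fin 6 → ℂ := fun y i => (1 / 2) * (x y i - Sop x y i)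

/-- The free evolution `D_p` at total momentum `p`:
`(D_p x)(y) = (e^{2ip} x(y)₁, e^{−2ip} x(y)₂, x(y+2)₃, e^{2ip} x(y)₄, e^{−2ip} x(y)₅, x(y−2)₆)`. -/
def Dop (p : ℝ) (x : ℤ → Fin 6 → ℂ) : ℤ → Fin 6 → ℂ := fun y =>
  ![Complex.exp (2 * p * Complex.I) * x y 0,
    Complex.exp (-(2 * p) * Complex.I) * x y 1,
    x (y + 2) 2,
    Complex.exp (2 * p * Complex.I) * x y 3,
    Complex.exp (-(2 * p) * Complex.I) * x y 4,
    x (y - 2) 5]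

/-- The interaction `J`: `(J x)(0) = E · x(0)` and `(J x)(y) = x(y)` for `y ≠ 0`. -/
def Jop (l : ℂ) (x : ℤ → Fin 6 → ℂ) : ℤ → Fin 6 → ℂ := fun y =>
  if y = 0 then (Emat l).mulVec (x 0) else x y

/-- The one-step two-particle evolution `A_p = P₋ ∘ J ∘ D_p ∘ P₋`. -/
def Aop (l : ℂ) (p : ℝ) : (ℤ → Fin 6 → ℂ) → (ℤ → Fin 6 → ℂ) :=
  Pneg ∘ Jop l ∘ Dop p ∘ Pneg

/-- The vector `ψ_f` supported on odd relative positions: `ψ_f(2y+1)₃ = f(y)`,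
`ψ_f(−2y−1)₆ = −f(y)`, all other components zero. -/
def psiodd (f : ℤ → ℂ) : ℤ → Fin 6 → ℂ := fun z =>
  ![0, 0, if Odd z then f ((z - 1) / 2) else 0,
    0, 0, if Odd z then -f ((-z - 1) / 2) else 0]

/-! `ψ_f` is antisymmetric under the swap and vanishes at the interaction site `0` (only odd
sites are occupied), so `P₋` and `J` both fix it and only the free shift `D_p` acts. -/

lemma Pneg_eq_self_of_Sop_eq_neg {x : ℤ → Fin 6 → ℂ} (hx : Sop x = -x) : Pneg x = x := by
  funext y i
  simp only [Pneg, hx, Pi.neg_apply]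
  ring

lemma Jop_eq_self_of_apply_zero {x : ℤ → Fin 6 → ℂ} (hx : x 0 = 0) (l : ℂ) : Jop l x = x := by
  funext y
  by_cases hy : y = 0
  · subst hy
    simp [Jop, hx]
  · simp [Jop, hy]

lemma psiodd_apply_zero (f : ℤ → ℂ) : psiodd f 0 = 0 := by
  funext i
  fin_cases i <;> simp [psiodd]

lemma Sop_psiodd (f : ℤ → ℂ) : Sop (psiodd f) = -psiodd f := by
  funext y i
  fin_cases i <;> simp [Sop, psiodd, neg_ite]

lemma Dop_psiodd (p : ℝ) (f : ℤ → ℂ) :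
    Dop p (psiodd f) = psiodd (fun y => f (y + 1)) := by
  funext y i
  have odd_add_two : Odd (y + 2) ↔ Odd y := by simp [parity_simps]
  have odd_sub_two : Odd (y - 2) ↔ Odd y := by simp [parity_simps]
  have half_add_two : (y + 2 - 1) / 2 = (y - 1) / 2 + 1 := by omega
  have half_sub_two : (2 - y - 1) / 2 = (-y - 1) / 2 + 1 := by omega
  fin_cases i <;> simp [Dop, psiodd, odd_add_two, odd_sub_two, half_add_two, half_sub_two]

/-- On the odd-site antisymmetric subspace `H_c` the interaction is invisible and the
interacting two-particle evolution acts as the free bilateral shift: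
`A_p ψ_f = ψ_g` with `g(y) = f(y+1)`. -/
theorem Aop_on_odd_subspace (l : ℂ) (p : ℝ) (f : ℤ → ℂ) :
    Aop l p (psiodd f) = psiodd (fun y => f (y + 1)) := by
  have Pneg_psiodd (g : ℤ → ℂ) : Pneg (psiodd g) = psiodd g :=
    Pneg_eq_self_of_Sop_eq_neg (Sop_psiodd g)
  simp only [Aop, Function.comp_apply, Pneg_psiodd, Dop_psiodd,
    Jop_eq_self_of_apply_zero (psiodd_apply_zero _)]
end
end
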